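/- Let v ∈ C^∞(𝕋^d, ℝ^d) with div v = 0. Then div(R(Δv)) = ∇v + (∇v)^T, where R is the tensor antidivergence operator (Rv)_{ij} = R_{ijk}v_k with R_{ijk} = ((d−2)/(d−1)) Δ^{−2} ∂_i∂_j∂_k − (1/(d−1)) Δ^{−1} ∂_k δ_{ij} + Δ^{−1} ∂_i δ_{jk} + Δ^{−1} ∂_j δ_{ik}. -/

import Mathlib

open MeasureTheory

noncomputable section

/-- Points of the `d`-dimensional space underlying the torus `𝕋^d = [-π,π]^d`. -/
abbrev Ed (d : ℕ) := EuclideanSpace ℝ (Fin d)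

/-- Partial derivative `∂ᵢ`. -/
noncomputable def pd {d : ℕ} (i : Fin d) (f : Ed d → ℝ) : Ed d → ℝ :=
  fun x => fderiv ℝ f x (EuclideanSpace.single i 1)

/-- Laplacian `Δ = Σᵢ ∂ᵢ∂ᵢ`. -/
noncomputable def lap {d : ℕ} (f : Ed d → ℝ) : Ed d → ℝ :=
  fun x => ∑ i, pd i (pd i f) x

/-- Fundamental box `[-π,π]^d` of the torus. -/
def box (d : ℕ) : Set (Ed d) := (WithLp.ofLp : Ed d → (Fin d → ℝ)) ⁻¹' Set.univ.pi fun _ : Fin d => Set.Icc (-Real.pi) Real.pi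

/-- Average `⨍_{𝕋^d} f`. -/
noncomputable def avgBox {d : ℕ} (f : Ed d → ℝ) : ℝ := ⨍ x in box d, f x

/-- `2π`-periodicity in each coordinate (i.e. `f` lives on the torus `𝕋^d`). -/
def Per {d : ℕ} {α : Type*} (f : Ed d → α) : Prop :=
  ∀ (x : Ed d) (i : Fin d), f (x + EuclideanSpace.single i (2 * Real.pi)) = f x

/-- `invLap` is the mean-zero inverse Laplacian `Δ⁻¹` on smooth periodic functions. -/
def IsInvLap (d : ℕ) (invLap : (Ed d → ℝ) → (Ed d → ℝ)) : Prop :=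
  ∀ f : Ed d → ℝ, ContDiff ℝ (⊤ : ℕ∞) f → Per f →
    ContDiff ℝ (⊤ : ℕ∞) (invLap f) ∧ Per (invLap f) ∧
    (∀ x, lap (invLap f) x = f x - avgBox f) ∧ avgBox (invLap f) = 0

/-- Divergence of a vector field `v : 𝕋^d → ℝ^d`. -/
noncomputable def divVec {d : ℕ} (v : Ed d → Ed d) : Ed d → ℝ :=
  fun x => ∑ k, pd k (fun z => v z k) x

/-- The tensor antidivergence `(𝓡 v)_{ij} = 𝓡_{ijk} v_k` with
`𝓡_{ijk} = ((d-2)/(d-1)) Δ⁻² ∂ᵢ∂ⱼ∂ₖ - (1/(d-1)) Δ⁻¹ ∂ₖ δ_{ij} + Δ⁻¹ ∂ᵢ δ_{jk} + Δ⁻¹ ∂ⱼ δ_{ik}`. -/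
noncomputable def Rmat {d : ℕ} (invLap : (Ed d → ℝ) → (Ed d → ℝ))
    (v : Ed d → Ed d) (i j : Fin d) : Ed d → ℝ :=
  fun x =>
    ((d : ℝ) - 2) / ((d : ℝ) - 1) * invLap (invLap (pd i (pd j (divVec v)))) x
      - (if i = j then (1 : ℝ) else 0) / ((d : ℝ) - 1) * invLap (divVec v) x
      + invLap (pd i (fun z => v z j)) x
      + invLap (pd j (fun z => v z i)) x


/-- Componentwise Laplacian of a vector field. -/
noncomputable def lapVec {d : ℕ} (v : Ed d → Ed d) : Ed d → Ed d :=
  fun x => (EuclideanSpace.equiv (Fin d) ℝ).symm (fun k => lap (fun z => v z k) x)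


/-- The measurable equivalence `Ed → (ι → ℝ)`. -/
def EuclideanSpace.measurableEquiv (ι : Type*) [Fintype ι] : EuclideanSpace ℝ ι ≃ᵐ (ι → ℝ) :=
  (MeasurableEquiv.toLp 2 (ι → ℝ)).symm

theorem EuclideanSpace.volume_preserving_measurableEquiv (ι : Type*) [Fintype ι] :
    MeasurePreserving (EuclideanSpace.measurableEquiv ι) :=
  EuclideanSpace.volume_preserving_symm_measurableEquiv_toLp ι

section Aux
variable {d : ℕ}

lemma contDiff_pd {f : Ed d → ℝ} (hf : ContDiff ℝ (⊤ : ℕ∞) f) (i : Fin d) : ContDiff ℝ (⊤ : ℕ∞) (pd i f) :=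
  ((ContinuousLinearMap.apply ℝ ℝ (EuclideanSpace.single i 1)).contDiff.comp
    (hf.fderiv_right (m := (⊤ : ℕ∞)) (by simp)) : )

lemma per_pd {f : Ed d → ℝ} (hf : Differentiable ℝ f) (hp : Per f) (i : Fin d) :
    Per (pd i f) := by
  intro x j
  set s := EuclideanSpace.single j (2 * Real.pi)
  have h1 : HasFDerivAt (fun y => f (y + s)) (fderiv ℝ f (x + s)) x := by
    exact (hf (x + s)).hasFDerivAt.comp x ((hasFDerivAt_id x).add_const s)
  have h2 : (fun y => f (y + s)) = f := funext fun y => hp y j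
  rw [h2] at h1
  simp only [pd, h1.fderiv]

lemma pd_comm {f : Ed d → ℝ} (hf : ContDiff ℝ (⊤ : ℕ∞) f) (i j : Fin d) :
    pd i (pd j f) = pd j (pd i f) := by
  have hdf : Differentiable ℝ f := hf.differentiable (by simp)
  have hdf' : Differentiable ℝ (fderiv ℝ f) :=
    (hf.fderiv_right (m := (⊤ : ℕ∞)) ((by simp))).differentiable (by simp)
  have key : ∀ (a b : Fin d) (x : Ed d),
      pd a (pd b f) x = fderiv ℝ (fderiv ℝ f) x (EuclideanSpace.single a 1)
        (EuclideanSpace.single b 1) := by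
    intro a b x
    have : pd b f = fun y => (ContinuousLinearMap.apply ℝ ℝ (EuclideanSpace.single b 1))
        (fderiv ℝ f y) := rfl
    rw [pd, this]
    have := ((ContinuousLinearMap.apply ℝ ℝ (EuclideanSpace.single b 1)).hasFDerivAt.comp x
      (hdf' x).hasFDerivAt).fderiv
    simp only [Function.comp_def] at this
    rw [this]
    rfl
  funext x
  rw [key i j x, key j i x]
  exact second_derivative_symmetric (fun y => (hdf y).hasFDerivAt) (hdf' x).hasFDerivAt _ _

lemma pd_const (i : Fin d) (c : ℝ) : pd i (fun _ : Ed d => c) = fun _ => 0 := by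
  funext x; simp [pd]

lemma pd_sum {ι : Type*} (s : Finset ι) (F : ι → Ed d → ℝ)
    (hF : ∀ k ∈ s, Differentiable ℝ (F k)) (i : Fin d) :
    pd i (fun y => ∑ k ∈ s, F k y) = fun y => ∑ k ∈ s, pd i (F k) y := by
  funext x
  simp only [pd]
  rw [fderiv_fun_sum (fun k hk => (hF k hk).differentiableAt)]
  simp

lemma pd_sub_add_const {u g : Ed d → ℝ} (hu : Differentiable ℝ u) (hg : Differentiable ℝ g)
    (c : ℝ) (i : Fin d) :
    pd i (fun y => u y - g y + c) = fun y => pd i u y - pd i g y := by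
  funext x
  simp only [pd, fderiv_add_const, fderiv_fun_sub (hu x) (hg x)]
  simp

lemma contDiff_lap {f : Ed d → ℝ} (hf : ContDiff ℝ (⊤ : ℕ∞) f) : ContDiff ℝ (⊤ : ℕ∞) (lap f) := by
  have : lap f = fun x => ∑ i : Fin d, pd i (pd i f) x := rfl
  rw [this]
  exact ContDiff.sum fun i _ => contDiff_pd (contDiff_pd hf i) i

lemma per_lap {f : Ed d → ℝ} (hf : ContDiff ℝ (⊤ : ℕ∞) f) (hp : Per f) : Per (lap f) := by
  intro x j
  simp only [lap]
  refine Finset.sum_congr rfl fun i _ => ?_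
  exact per_pd ((contDiff_pd hf i).differentiable (by simp)) (per_pd (hf.differentiable (by simp)) hp i) i x j

lemma pd_lap_comm {f : Ed d → ℝ} (hf : ContDiff ℝ (⊤ : ℕ∞) f) (i : Fin d) :
    pd i (lap f) = lap (pd i f) := by
  have : lap f = fun y => ∑ m : Fin d, pd m (pd m f) y := rfl
  rw [this, pd_sum _ _ (fun m _ => (contDiff_pd (contDiff_pd hf m) m).differentiable (by simp))]
  funext x
  simp only [lap]
  refine Finset.sum_congr rfl fun m _ => ?_
  rw [pd_comm (contDiff_pd hf m) i m, pd_comm hf i m, pd_comm (contDiff_pd hf i) m m]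

lemma box_eq_preimage :
    box d = (EuclideanSpace.measurableEquiv (Fin d)) ⁻¹'
      (Set.Icc (fun _ => -Real.pi) (fun _ => Real.pi)) := by
  ext x
  simp only [box, Set.mem_preimage, ← Set.pi_univ_Icc]
  exact ⟨fun h i hi => h i hi, fun h i hi => h i hi⟩

lemma volume_box : volume (box d) = (ENNReal.ofReal (2 * Real.pi)) ^ d := by
  rw [box_eq_preimage,
    (EuclideanSpace.volume_preserving_measurableEquiv (Fin d)).measure_preimage
      (measurableSet_Icc.nullMeasurableSet), Real.volume_Icc_pi]
  simp [two_mul]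

example : True := trivial

lemma integral_pd_eq_zero (hd : 1 ≤ d) {f : Ed d → ℝ} (hf : ContDiff ℝ (⊤ : ℕ∞) f) (hp : Per f)
    (i : Fin d) : ∫ x in box d, pd i f x = 0 := by
  obtain ⟨n, rfl⟩ : ∃ n, d = n + 1 := ⟨d - 1, (Nat.succ_pred_eq_of_pos hd).symm⟩
  set L : (Fin (n+1) → ℝ) ≃L[ℝ] Ed (n+1) := (EuclideanSpace.equiv (Fin (n+1)) ℝ).symm with hLdef
  set F : (Fin (n+1) → ℝ) → ℝ := fun y => f (L y) with hF
  set D : (Fin (n+1) → ℝ) → (Fin (n+1) → ℝ) →L[ℝ] ℝ :=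
    fun y => (fderiv ℝ f (L y)).comp (L : (Fin (n+1) → ℝ) →L[ℝ] Ed (n+1)) with hD
  have hLsingle : ∀ (j : Fin (n+1)) (c : ℝ), L (Pi.single j c) = EuclideanSpace.single j c := by
    intro j c; rfl
  have e_pres := (EuclideanSpace.volume_preserving_measurableEquiv (Fin (n+1))).symm
  have hpre : (EuclideanSpace.measurableEquiv (Fin (n+1))).symm ⁻¹' (box (n+1))
      = Set.Icc (fun _ => -Real.pi : Fin (n+1) → ℝ) (fun _ => Real.pi) := by
    rw [box_eq_preimage]
    ext y
    simp
  have transfer :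
      (∫ y in Set.Icc (fun _ => -Real.pi : Fin (n+1) → ℝ) (fun _ => Real.pi),
          pd i f ((EuclideanSpace.measurableEquiv (Fin (n+1))).symm y))
        = ∫ x in box (n+1), pd i f x := by
    rw [← hpre]
    exact e_pres.setIntegral_preimage_emb
      (EuclideanSpace.measurableEquiv (Fin (n+1))).symm.measurableEmbedding _ _
  have hsymmL : ∀ y, (EuclideanSpace.measurableEquiv (Fin (n+1))).symm y = L y := fun _ => rfl
  rw [← transfer]
  have hdiffF : ∀ x, HasFDerivAt F (D x) x := by
    intro x
    exact ((hf.differentiable (by simp) (L x)).hasFDerivAt.comp x (L.hasFDerivAt))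
  have hDval : ∀ y, D y (Pi.single i 1) = pd i f (L y) := by
    intro y
    simp only [hD, ContinuousLinearMap.comp_apply]
    rw [show ((L : (Fin (n+1) → ℝ) →L[ℝ] Ed (n+1)) (Pi.single i 1)) = EuclideanSpace.single i 1
      from hLsingle i 1]
    rfl
  have hle : (fun _ => -Real.pi : Fin (n+1) → ℝ) ≤ (fun _ => Real.pi) := fun _ => by
    have := Real.pi_pos; dsimp; linarith
  have hsum : ∀ y, (∑ j, (if j = i then D y else 0) (Pi.single j 1)) = pd i f (L y) := by
    intro y
    rw [← hDval y]
    rw [Finset.sum_eq_single i (fun b _ hb => by simp [hb]) (by simp)]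
    simp
  have key := integral_divergence_of_hasFDerivAt_off_countable'
    (fun _ => -Real.pi : Fin (n+1) → ℝ) (fun _ => Real.pi) hle
    (fun j => if j = i then F else fun _ => 0)
    (fun j y => if j = i then D y else 0) ∅
    Set.countable_empty
    (fun j => by
      by_cases h : j = i
      · simp only [h, ↓reduceIte]; exact (hf.continuous.comp L.continuous).continuousOn
      · simpa [h] using (continuousOn_const :
          ContinuousOn (fun _ : Fin (n+1) → ℝ => (0:ℝ)) _))
    (fun x _ j => by
      by_cases h : j = i
      · simpa [h] using hdiffF x
      · simpa [h] using hasFDerivAt_const (0:ℝ) x)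
    (by
      apply (ContinuousOn.integrableOn_compact isCompact_Icc)
      have hc : Continuous fun y => pd i f (L y) :=
        ((contDiff_pd hf i).continuous.comp L.continuous)
      exact (hc.congr (fun y => (hsum y).symm)).continuousOn)
  have hLHS : (∫ y in Set.Icc (fun _ => -Real.pi : Fin (n+1) → ℝ) (fun _ => Real.pi),
        ∑ j, (if j = i then D y else 0) (Pi.single j 1))
      = ∫ y in Set.Icc (fun _ => -Real.pi : Fin (n+1) → ℝ) (fun _ => Real.pi),
          pd i f ((EuclideanSpace.measurableEquiv (Fin (n+1))).symm y) :=
    setIntegral_congr_fun measurableSet_Icc fun y _ => by rw [hsum y, hsymmL]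
  rw [← hLHS, key]
  apply Finset.sum_eq_zero
  intro j _
  rcases eq_or_ne j i with rfl | hne
  · have hins : ∀ x : Fin n → ℝ, Fin.insertNth (α := fun _ => ℝ) j Real.pi x
        = Fin.insertNth (α := fun _ => ℝ) j (-Real.pi) x + Pi.single j (2 * Real.pi) := by
      intro x
      funext k
      refine Fin.succAboveCases j ?_ ?_ k
      · simp; ring
      · intro m
        simp [Pi.single_eq_of_ne (Fin.succAbove_ne j m)]
    have hFper : ∀ x : Fin n → ℝ, F (Fin.insertNth (α := fun _ => ℝ) j Real.pi x)
        = F (Fin.insertNth (α := fun _ => ℝ) j (-Real.pi) x) := by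
      intro x
      simp only [hF]
      rw [hins x, map_add, hLsingle]
      exact hp _ j
    simp only [if_pos rfl]
    rw [sub_eq_zero]
    exact setIntegral_congr_fun measurableSet_Icc fun x _ => hFper x
  · simp [hne]

lemma vol_box_ne_zero : volume (box d) ≠ 0 := by
  rw [volume_box]
  simp [pow_eq_zero_iff', ENNReal.ofReal_eq_zero, not_le]
  intro h
  nlinarith [Real.pi_pos]

lemma vol_box_ne_top : volume (box d) ≠ ⊤ := by
  rw [volume_box]
  exact ENNReal.pow_ne_top ENNReal.ofReal_ne_top

lemma vol_box_toReal_pos : 0 < (volume (box d)).toReal :=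
  ENNReal.toReal_pos vol_box_ne_zero vol_box_ne_top

lemma avgBox_eq (f : Ed d → ℝ) :
    avgBox f = ((volume (box d)).toReal)⁻¹ * ∫ x in box d, f x := by
  rw [avgBox, setAverage_eq, smul_eq_mul, measureReal_def]

lemma single_add_val (i : Fin d) (a b : ℝ) :
    EuclideanSpace.single i (a + b) = EuclideanSpace.single i a + EuclideanSpace.single i b := by
  ext j
  by_cases h : j = i <;> simp [EuclideanSpace.single_apply, h, PiLp.add_apply]

lemma single_zero_val (i : Fin d) : EuclideanSpace.single i (0:ℝ) = 0 := by
  ext j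
  by_cases h : j = i <;> simp [EuclideanSpace.single_apply, h]

lemma per_int {α : Type*} {g : Ed d → α} (hg : Per g) (x : Ed d) (i : Fin d) (k : ℤ) :
    g (x + EuclideanSpace.single i (2 * Real.pi * k)) = g x := by
  induction k using Int.induction_on with
  | zero => norm_num [single_zero_val]
  | succ k ih =>
    have : (2 * Real.pi * ((k:ℝ) + 1)) = 2 * Real.pi * k + 2 * Real.pi := by ring
    push_cast
    rw [this, single_add_val, ← add_assoc]
    rw [hg (x + EuclideanSpace.single i (2 * Real.pi * k)) i]
    exact ih
  | pred k ih =>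
    have harg : (2 * Real.pi * ((-(k:ℝ)) - 1)) + 2 * Real.pi = 2 * Real.pi * (-(k:ℝ)) := by ring
    have := hg (x + EuclideanSpace.single i (2 * Real.pi * ((-(k:ℝ)) - 1))) i
    rw [add_assoc, ← single_add_val, harg] at this
    push_cast
    push_cast at ih
    rw [← this]
    exact ih

lemma per_shift {α : Type*} {g : Ed d → α} (hg : Per g) (x : Ed d) :
    ∃ y ∈ box d, g y = g x := by
  classical
  have h2pi : (0:ℝ) < 2 * Real.pi := by positivity
  set k : Fin d → ℤ := fun j => ⌊(x j + Real.pi) / (2 * Real.pi)⌋ with hk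
  refine ⟨(EuclideanSpace.equiv (Fin d) ℝ).symm (fun j => x j - 2 * Real.pi * k j), ?_, ?_⟩
  · intro j _
    have h1 : (k j : ℝ) ≤ (x j + Real.pi) / (2 * Real.pi) := Int.floor_le _
    have h2 : (x j + Real.pi) / (2 * Real.pi) < k j + 1 := Int.lt_floor_add_one _
    rw [le_div_iff₀ h2pi] at h1
    rw [div_lt_iff₀ h2pi] at h2
    have : (EuclideanSpace.equiv (Fin d) ℝ).symm (fun j => x j - 2 * Real.pi * ↑(k j)) j
        = x j - 2 * Real.pi * k j := rfl
    rw [this]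
    constructor
    · nlinarith
    · nlinarith
  · have main : ∀ s : Finset (Fin d),
        g ((EuclideanSpace.equiv (Fin d) ℝ).symm
          (fun j => if j ∈ s then x j - 2 * Real.pi * k j else x j)) = g x := by
      intro s
      induction s using Finset.induction_on with
      | empty =>
        have : (EuclideanSpace.equiv (Fin d) ℝ).symm
            (fun j => if j ∈ (∅ : Finset (Fin d)) then x j - 2 * Real.pi * k j else x j) = x := by
          ext j; simp
        rw [this]
      | @insert a s ha ih =>
        have hvec : (EuclideanSpace.equiv (Fin d) ℝ).symm
            (fun j => if j ∈ insert a s then x j - 2 * Real.pi * k j else x j)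
            = ((EuclideanSpace.equiv (Fin d) ℝ).symm
                (fun j => if j ∈ s then x j - 2 * Real.pi * k j else x j))
              + EuclideanSpace.single a (2 * Real.pi * (-(k a) : ℤ)) := by
          ext j
          by_cases hja : j = a
          · subst hja
            simp [ha, PiLp.add_apply, EuclideanSpace.single_apply]
            ring
          · simp [hja, PiLp.add_apply, EuclideanSpace.single_apply]
        rw [hvec, per_int hg _ a (-(k a)), ih]
    have := main Finset.univ
    simpa using this

lemma box_image : box d = (EuclideanSpace.equiv (Fin d) ℝ).symm ''
    (Set.Icc (fun _ => -Real.pi) (fun _ => Real.pi)) := by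
  ext x
  constructor
  · intro hx
    refine ⟨EuclideanSpace.equiv (Fin d) ℝ x, ?_, rfl⟩
    rw [Set.mem_Icc]
    exact ⟨fun j => (hx j (Set.mem_univ j)).1, fun j => (hx j (Set.mem_univ j)).2⟩
  · rintro ⟨y, hy, rfl⟩
    rw [Set.mem_Icc] at hy
    intro j _
    exact ⟨hy.1 j, hy.2 j⟩

lemma isCompact_box : IsCompact (box d) := by
  rw [box_image]
  exact isCompact_Icc.image (EuclideanSpace.equiv (Fin d) ℝ).symm.continuous

lemma convex_box : Convex ℝ (box d) := by
  intro x hx y hy a b ha hb hab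
  intro j _
  have h1 := hx j (Set.mem_univ j)
  have h2 := hy j (Set.mem_univ j)
  have : (a • x + b • y) j = a * x j + b * y j := rfl
  rw [this]
  exact convex_Icc (-Real.pi) Real.pi h1 h2 ha hb hab

lemma zero_mem_interior_box : (0 : Ed d) ∈ interior (box d) := by
  rw [mem_interior]
  refine ⟨Metric.ball 0 Real.pi, ?_, Metric.isOpen_ball, Metric.mem_ball_self Real.pi_pos⟩
  intro z hz
  rw [Metric.mem_ball, dist_zero_right] at hz
  intro j _
  have hzj : |z j| ≤ ‖z‖ := by
    have h1 : z j = inner ℝ (EuclideanSpace.single j (1:ℝ)) z := by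
      rw [EuclideanSpace.inner_single_left]; simp
    rw [h1]
    calc |inner ℝ (EuclideanSpace.single j (1:ℝ)) z| ≤ ‖EuclideanSpace.single j (1:ℝ)‖ * ‖z‖ :=
          abs_real_inner_le_norm _ _
      _ = ‖z‖ := by rw [EuclideanSpace.norm_single]; simp
  have := abs_le.mp (hzj.trans_lt hz).le
  exact ⟨this.1, this.2⟩

lemma zero_of_per_nonneg_int_zero {h : Ed d → ℝ} (hc : Continuous h) (hp : Per h)
    (hnn : ∀ x, 0 ≤ h x) (hint : ∫ x in box d, h x = 0) : ∀ x, h x = 0 := by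
  have hInt : IntegrableOn h (box d) := hc.continuousOn.integrableOn_compact isCompact_box
  have hae : h =ᵐ[volume.restrict (box d)] 0 :=
    (integral_eq_zero_iff_of_nonneg (fun x => hnn x) hInt).mp hint
  have hms : MeasurableSet {x : Ed d | h x ≠ 0} :=
    (isOpen_compl_iff.mpr (isClosed_eq hc continuous_const)).measurableSet
  have hvol : volume ({x : Ed d | h x ≠ 0} ∩ box d) = 0 := by
    have := ae_iff.mp hae
    simp only [Pi.zero_apply] at this
    rwa [Measure.restrict_apply hms] at this
  have hS : ({x : Ed d | h x ≠ 0} ∩ interior (box d)) = ∅ := by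
    have hopen : IsOpen ({x : Ed d | h x ≠ 0} ∩ interior (box d)) :=
      (isOpen_compl_iff.mpr (isClosed_eq hc continuous_const)).inter isOpen_interior
    have hz : volume ({x : Ed d | h x ≠ 0} ∩ interior (box d)) = 0 :=
      measure_mono_null (Set.inter_subset_inter_right _ interior_subset) hvol
    exact hopen.eq_empty_of_measure_zero hz
  have hint_zero : ∀ x ∈ interior (box d), h x = 0 := by
    intro x hx
    by_contra hne
    exact absurd hS (Set.nonempty_iff_ne_empty.mp ⟨x, hne, hx⟩)
  have heq : Set.EqOn h 0 (closure (interior (box d))) :=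
    (Set.EqOn.closure (fun x hx => hint_zero x hx) hc continuous_const)
  have hbox_zero : ∀ x ∈ box d, h x = 0 := by
    intro x hx
    apply heq
    have : Filter.Tendsto (fun t : ℝ => x + t • ((0:Ed d) - x)) (nhdsWithin 0 (Set.Ioi 0))
        (nhds x) := by
      have hcont : Continuous (fun t : ℝ => x + t • ((0:Ed d) - x)) := by continuity
      have := hcont.tendsto 0
      simp only [zero_smul, add_zero] at this
      exact this.mono_left nhdsWithin_le_nhds
    refine mem_closure_of_tendsto this ?_
    filter_upwards [Ioc_mem_nhdsGT_of_mem (Set.mem_Ico.mpr ⟨le_refl 0, zero_lt_one⟩)] with t ht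
    exact convex_box.add_smul_sub_mem_interior hx zero_mem_interior_box ht
  intro x
  obtain ⟨y, hy, hxy⟩ := per_shift hp x
  rw [← hxy]
  exact hbox_zero y hy

lemma pd_sub {u g : Ed d → ℝ} (hu : Differentiable ℝ u) (hg : Differentiable ℝ g) (i : Fin d) :
    pd i (fun y => u y - g y) = fun y => pd i u y - pd i g y := by
  funext x
  simp only [pd, fderiv_fun_sub (hu x) (hg x)]
  simp

lemma avgBox_const (c : ℝ) : avgBox (fun _ : Ed d => c) = c := by
  rw [avgBox_eq, setIntegral_const, measureReal_def, smul_eq_mul, ← mul_assoc,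
    inv_mul_cancel₀ vol_box_toReal_pos.ne', one_mul]

lemma avgBox_pd_zero (hd : 1 ≤ d) {f : Ed d → ℝ} (hf : ContDiff ℝ (⊤ : ℕ∞) f) (hp : Per f) (i : Fin d) :
    avgBox (pd i f) = 0 := by
  rw [avgBox_eq, integral_pd_eq_zero hd hf hp i, mul_zero]

lemma liouville (hd : 1 ≤ d) {f : Ed d → ℝ} (hf : ContDiff ℝ (⊤ : ℕ∞) f) (hp : Per f)
    (hlap : ∀ x, lap f x = 0) (havg : avgBox f = 0) : ∀ x, f x = 0 := by
  have hdf : Differentiable ℝ f := hf.differentiable (by simp)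
  set q : Ed d → ℝ := fun x => ∑ i, (pd i f x)^2 with hq
  have hq_cont : Continuous q := by
    apply continuous_finset_sum
    intro i _
    exact ((contDiff_pd hf i).continuous).pow 2
  have hq_per : Per q := by
    intro x j
    simp only [hq]
    exact Finset.sum_congr rfl fun i _ => by rw [per_pd hdf hp i x j]
  have hq_nonneg : ∀ x, 0 ≤ q x := fun x => Finset.sum_nonneg fun i _ => sq_nonneg _
  have hprod_cd : ∀ i : Fin d, ContDiff ℝ (⊤ : ℕ∞) (fun z => f z * pd i f z) :=
    fun i => hf.mul (contDiff_pd hf i)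
  have hprod_per : ∀ i : Fin d, Per (fun z => f z * pd i f z) := by
    intro i x j
    simp only [hp x j, per_pd hdf hp i x j]
  have hprod_eq : ∀ (i : Fin d) (x : Ed d), pd i (fun z => f z * pd i f z) x
      = pd i f x * pd i f x + f x * pd i (pd i f) x := by
    intro i x
    show (fderiv ℝ (fun z => f z * pd i f z) x) (EuclideanSpace.single i 1) = _
    rw [fderiv_fun_mul (hdf x) ((contDiff_pd hf i).differentiable (by simp) x)]
    simp only [ContinuousLinearMap.add_apply, ContinuousLinearMap.coe_smul', Pi.smul_apply,
      smul_eq_mul]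
    show _ = pd i f x * pd i f x + f x * pd i (pd i f) x
    simp only [pd]
    ring
  have hq_sum : ∀ x, q x = ∑ i, pd i (fun z => f z * pd i f z) x := by
    intro x
    have : ∑ i, pd i (fun z => f z * pd i f z) x
        = ∑ i, (pd i f x * pd i f x + f x * pd i (pd i f) x) :=
      Finset.sum_congr rfl fun i _ => hprod_eq i x
    rw [this, Finset.sum_add_distrib, ← Finset.mul_sum]
    have hl : ∑ i, pd i (pd i f) x = lap f x := rfl
    rw [hl, hlap x, mul_zero, add_zero, hq]
    exact Finset.sum_congr rfl fun i _ => (sq (pd i f x)) ▸ (pow_two (pd i f x)).symm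
  have hint_q : ∫ x in box d, q x = 0 := by
    have : ∫ x in box d, q x = ∑ i, ∫ x in box d, pd i (fun z => f z * pd i f z) x := by
      rw [← integral_finset_sum]
      · exact setIntegral_congr_fun isCompact_box.measurableSet fun x _ => hq_sum x
      · intro i _
        exact ((contDiff_pd (hprod_cd i) i).continuous).continuousOn.integrableOn_compact
          isCompact_box
    rw [this]
    exact Finset.sum_eq_zero fun i _ =>
      integral_pd_eq_zero hd (hprod_cd i) (hprod_per i) i
  have hq0 : ∀ x, q x = 0 := zero_of_per_nonneg_int_zero hq_cont hq_per hq_nonneg hint_q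
  have hpd0 : ∀ (i : Fin d) (x : Ed d), pd i f x = 0 := by
    intro i x
    have := (Finset.sum_eq_zero_iff_of_nonneg (fun i _ => sq_nonneg (pd i f x))).mp (hq0 x)
    exact pow_eq_zero_iff (two_ne_zero) |>.mp (this i (Finset.mem_univ i))
  have hfderiv0 : ∀ x, fderiv ℝ f x = 0 := by
    intro x
    apply ContinuousLinearMap.coe_injective
    apply Module.Basis.ext (EuclideanSpace.basisFun (Fin d) ℝ).toBasis
    intro i
    simp only [OrthonormalBasis.coe_toBasis, EuclideanSpace.basisFun_apply]
    exact hpd0 i x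
  intro x
  have hconst : ∀ y, f y = f x := fun y => is_const_of_fderiv_eq_zero hdf hfderiv0 y x
  have : avgBox f = f x := by
    have : avgBox f = avgBox (fun _ => f x) := congrArg avgBox (funext hconst)
    rw [this, avgBox_const]
  rw [← this, havg]

lemma avgBox_sub_add_const {u g : Ed d → ℝ} (hu : Continuous u) (hg : Continuous g) (c : ℝ) :
    avgBox (fun y => u y - g y + c) = avgBox u - avgBox g + c := by
  have hiu : IntegrableOn u (box d) := hu.continuousOn.integrableOn_compact isCompact_box
  have hig : IntegrableOn g (box d) := hg.continuousOn.integrableOn_compact isCompact_box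
  have hic : IntegrableOn (fun _ : Ed d => c) (box d) :=
    integrableOn_const vol_box_ne_top
  have h3 : IntegrableOn (fun x => u x - g x) (box d) := hiu.sub hig
  rw [avgBox_eq, avgBox_eq, avgBox_eq, integral_add h3 hic,
    integral_sub hiu hig, setIntegral_const, measureReal_def, smul_eq_mul, mul_add, mul_sub, ← mul_assoc,
    inv_mul_cancel₀ vol_box_toReal_pos.ne', one_mul]

lemma avgBox_lap_zero (hd : 1 ≤ d) {g : Ed d → ℝ} (hg : ContDiff ℝ (⊤ : ℕ∞) g) (hp : Per g) :
    avgBox (lap g) = 0 := by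
  rw [avgBox_eq]
  have h1 : (∫ x in box d, lap g x) = ∫ x in box d, ∑ i, pd i (pd i g) x := rfl
  have h2 : (∫ x in box d, ∑ i, pd i (pd i g) x)
      = ∑ i, ∫ x in box d, pd i (pd i g) x := by
    apply integral_finset_sum
    intro i _
    exact ((contDiff_pd (contDiff_pd hg i) i).continuous).continuousOn.integrableOn_compact
      isCompact_box
  rw [h1, h2, Finset.sum_eq_zero fun i _ =>
    integral_pd_eq_zero hd (contDiff_pd hg i) (per_pd (hg.differentiable (by simp)) hp i) i,
    mul_zero]

lemma invLap_zero_fun (hd : 1 ≤ d) {inv : (Ed d → ℝ) → (Ed d → ℝ)} (hinv : IsInvLap d inv) :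
    inv (fun _ => 0) = fun _ => 0 := by
  obtain ⟨hsm, hper, hlap, havg⟩ := hinv (fun _ => 0) contDiff_const (fun x i => rfl)
  funext x
  apply liouville hd hsm hper _ havg
  intro y
  rw [hlap y]
  have : avgBox (fun _ : Ed d => (0:ℝ)) = 0 := avgBox_const 0
  rw [this, sub_zero]

lemma invLap_lap_eq (hd : 1 ≤ d) {inv : (Ed d → ℝ) → (Ed d → ℝ)} (hinv : IsInvLap d inv)
    {g : Ed d → ℝ} (hg : ContDiff ℝ (⊤ : ℕ∞) g) (hpg : Per g) :
    ∀ x, inv (lap g) x = g x - avgBox g := by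
  obtain ⟨hsm, hper, hlapu, havgu⟩ := hinv (lap g) (contDiff_lap hg) (per_lap hg hpg)
  have hdu : Differentiable ℝ (inv (lap g)) := hsm.differentiable (by simp)
  have hdg : Differentiable ℝ g := hg.differentiable (by simp)
  set h : Ed d → ℝ := fun x => inv (lap g) x - g x + avgBox g with hh
  have hsm2 : ContDiff ℝ (⊤ : ℕ∞) h := (hsm.sub hg).add contDiff_const
  have hper2 : Per h := by
    intro x j
    simp only [hh, hper x j, hpg x j]
  have hlap2 : ∀ x, lap h x = 0 := by
    intro x
    have hr1 : ∀ m : Fin d, pd m h = fun y => pd m (inv (lap g)) y - pd m g y :=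
      fun m => pd_sub_add_const hdu hdg _ m
    have hr2 : ∀ m : Fin d, pd m (pd m h) = fun y => pd m (pd m (inv (lap g))) y - pd m (pd m g) y := by
      intro m
      rw [hr1 m]
      exact pd_sub ((contDiff_pd hsm m).differentiable (by simp))
        ((contDiff_pd hg m).differentiable (by simp)) m
    have : lap h x = ∑ m, (pd m (pd m (inv (lap g))) x - pd m (pd m g) x) := by
      show (∑ m, pd m (pd m h) x) = _
      exact Finset.sum_congr rfl fun m _ => by rw [hr2 m]
    rw [this, Finset.sum_sub_distrib]
    have e1 : (∑ m, pd m (pd m (inv (lap g))) x) = lap (inv (lap g)) x := rfl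
    have e2 : (∑ m, pd m (pd m g) x) = lap g x := rfl
    rw [e1, e2, hlapu x, avgBox_lap_zero hd hg hpg, sub_zero, sub_self]
  have havg2 : avgBox h = 0 := by
    have : avgBox h = avgBox (inv (lap g)) - avgBox g + avgBox g :=
      avgBox_sub_add_const hsm.continuous hg.continuous _
    rw [this, havgu]
    ring
  have hzero := liouville hd hsm2 hper2 hlap2 havg2
  intro x
  have := hzero x
  simp only [hh] at this
  linarith

end Aux

/-- For a smooth divergence-free (periodic) vector field `v` on `𝕋^d`,
`d ≥ 2`, the antidivergence of `Δv` is the symmetric gradient: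
`div (𝓡 (Δ v)) = ∇v + (∇v)ᵀ`, componentwise `(𝓡(Δv))_{ij} = ∂ⱼvᵢ + ∂ᵢvⱼ`. -/
theorem stmt_4 (d : ℕ) (hd : 2 ≤ d)
    (invLap : (Ed d → ℝ) → (Ed d → ℝ)) (hinv : IsInvLap d invLap)
    (v : Ed d → Ed d) (hv : ContDiff ℝ (⊤ : ℕ∞) v) (hper : Per v)
    (hdiv : ∀ x, divVec v x = 0) :
    ∀ (i j : Fin d) (x : Ed d),
      Rmat invLap (lapVec v) i j x =
        pd j (fun z => v z i) x + pd i (fun z => v z j) x := by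
  have hd1 : 1 ≤ d := le_trans one_le_two hd
  set gk : Fin d → Ed d → ℝ := fun k => fun z => v z k with hgk
  have hgsm : ∀ k, ContDiff ℝ (⊤ : ℕ∞) (gk k) := contDiff_euclidean.mp hv
  have hgper : ∀ k, Per (gk k) := fun k x i => congrArg (fun w => w k) (hper x i)
  have hcomp : ∀ k, (fun z => lapVec v z k) = lap (gk k) := fun k => rfl
  have hdiv0 : divVec v = fun _ => (0:ℝ) := funext hdiv
  -- div (lapVec v) = 0
  have key : divVec (lapVec v) = fun _ => (0:ℝ) := by
    funext x
    have e1 : divVec (lapVec v) x = ∑ k, pd k (lap (gk k)) x := rfl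
    rw [e1]
    rw [Finset.sum_congr rfl fun k (_ : k ∈ Finset.univ) =>
      congrFun (congrArg (fun F => pd k F) (rfl : lap (gk k) = lap (gk k))) x]
    have e2 : (∑ k, pd k (lap (gk k)) x) = ∑ k, lap (pd k (gk k)) x :=
      Finset.sum_congr rfl fun k _ => by rw [pd_lap_comm (hgsm k) k]
    rw [e2]
    show (∑ k, ∑ m, pd m (pd m (pd k (gk k))) x) = 0
    rw [Finset.sum_comm]
    have e3 : ∀ m : Fin d, (∑ k, pd m (pd m (pd k (gk k))) x) = pd m (pd m (divVec v)) x := by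
      intro m
      have h4 : pd m (divVec v) = fun y => ∑ k, pd m (pd k (gk k)) y := by
        have hdv : divVec v = fun y => ∑ k, pd k (gk k) y := rfl
        rw [hdv]
        exact pd_sum Finset.univ _
          (fun k _ => (contDiff_pd (hgsm k) k).differentiable (by simp)) m
      have h5 : pd m (pd m (divVec v)) = fun y => ∑ k, pd m (pd m (pd k (gk k))) y := by
        rw [h4]
        exact pd_sum Finset.univ _
          (fun k _ => (contDiff_pd (contDiff_pd (hgsm k) k) m).differentiable (by simp)) m
      rw [h5]
    rw [Finset.sum_congr rfl fun m (_ : m ∈ Finset.univ) => e3 m, hdiv0]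
    have e4 : ∀ m : Fin d, pd m (pd m (fun _ : Ed d => (0:ℝ))) x = 0 := by
      intro m
      rw [pd_const m 0, pd_const m 0]
    rw [Finset.sum_congr rfl fun m (_ : m ∈ Finset.univ) => e4 m]
    simp
  have hz := invLap_zero_fun hd1 hinv
  intro i j x
  show ((d : ℝ) - 2) / ((d : ℝ) - 1) * invLap (invLap (pd i (pd j (divVec (lapVec v))))) x
      - (if i = j then (1 : ℝ) else 0) / ((d : ℝ) - 1) * invLap (divVec (lapVec v)) x
      + invLap (pd i (fun z => lapVec v z j)) x
      + invLap (pd j (fun z => lapVec v z i)) x = _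
  rw [key, pd_const j 0, pd_const i 0, hz, hz]
  rw [hcomp j, hcomp i, pd_lap_comm (hgsm j) i, pd_lap_comm (hgsm i) j]
  rw [invLap_lap_eq hd1 hinv (contDiff_pd (hgsm j) i)
      (per_pd ((hgsm j).differentiable (by simp)) (hgper j) i) x,
    invLap_lap_eq hd1 hinv (contDiff_pd (hgsm i) j)
      (per_pd ((hgsm i).differentiable (by simp)) (hgper i) j) x]
  rw [avgBox_pd_zero hd1 (hgsm j) (hgper j) i, avgBox_pd_zero hd1 (hgsm i) (hgper i) j]
  show _ = pd j (gk i) x + pd i (gk j) x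
  simp
  ring
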